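/- Consider the finite volume scheme for the cross-diffusion Cahn-Hilliard system on an admissible mesh. Let p ∈ ℕ and assume U^p satisfies the discrete volume-filling constraint Σ_{j=0}^n U^p_{j,K} = 1 for every cell K ∈ 𝒯. Then any solution U^{p+1} of the scheme also satisfies Σ_{j=0}^n U^{p+1}_{j,K} = 1 for every K ∈ 𝒯. -/
import Mathlib


/-!
STATEMENT 16: The finite volume scheme for the cross-diffusion Cahn-Hilliard
system preserves the discrete volume-filling constraint: if
`Σ_{j=0}^n U^p_{j,K} = 1` for every cell `K`, then any solution `U^{p+1}` of
one step of the scheme satisfies `Σ_{j=0}^n U^{p+1}_{j,K} = 1` for every `K`.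
-/

open MeasureTheory

noncomputable section

/-- Mirror value `V_{Kσ}` of the discrete field `V` across the face `σ`,
seen from the cell `K`. -/
def mirror {T F : Type*} [DecidableEq T] [DecidableEq F]
    (Fint : Finset F) (sideA sideB : F → T) (V : T → ℝ) (K : T) (σ : F) : ℝ :=
  if σ ∈ Fint then (if K = sideA σ then V (sideB σ) else V (sideA σ)) else V K

/-- Oriented jump `D_{Kσ}V = V_{Kσ} − V_K`. -/
def jump {T F : Type*} [DecidableEq T] [DecidableEq F]
    (Fint : Finset F) (sideA sideB : F → T) (V : T → ℝ) (K : T) (σ : F) : ℝ :=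
  mirror Fint sideA sideB V K σ - V K

/-- The logarithmic mean used for the edge values: `0` if either argument is
`≤ 0`, the common value if both are equal and positive, and
`(a−b)/(ln a − ln b)` otherwise. -/
def logMean (a b : ℝ) : ℝ :=
  if min a b ≤ 0 then 0 else if a = b then a else (a - b) / (Real.log a - Real.log b)

/-- Edge value `U_{i,σ}`: the logarithmic mean of the two adjacent cell values. -/
def edgeVal {T F : Type*} {n : ℕ} (sideA sideB : F → T)
    (Un : Fin (n + 1) → T → ℝ) (i : Fin (n + 1)) (σ : F) : ℝ :=
  logMean (Un i (sideA σ)) (Un i (sideB σ))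

/-- The discrete auxiliary variable
`W_{0,K}^{p+1/2} = −(ε/m_K) Σ_{σ∈ℰ_{K,int}} τ_σ D_{Kσ}U_0^{p+1} + β(1 − 2U_{0,K}^p)`. -/
def W0 {T F : Type*} [DecidableEq T] [DecidableEq F]
    (facesOf : T → Finset F) (Fint : Finset F) (sideA sideB : F → T)
    (τ : F → ℝ) (mK : T → ℝ) (ε β : ℝ) {n : ℕ}
    (Uc Un : Fin (n + 1) → T → ℝ) (K : T) : ℝ :=
  -(ε / mK K) * ∑ σ ∈ (facesOf K).filter (· ∈ Fint),
      τ σ * jump Fint sideA sideB (Un 0) K σ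
    + β * (1 - 2 * Uc 0 K)

/-- The discrete fluxes `J_{i,Kσ}^{p+1}` of the scheme. -/
def dflux {T F : Type*} [DecidableEq T] [DecidableEq F]
    (facesOf : T → Finset F) (Fint : Finset F) (sideA sideB : F → T)
    (τ : F → ℝ) (mK : T → ℝ) (ε β : ℝ) {n : ℕ}
    (Kc : Fin (n + 1) → Fin (n + 1) → ℝ)
    (Uc Un : Fin (n + 1) → T → ℝ) (i : Fin (n + 1)) (K : T) (σ : F) : ℝ :=
  if i = 0 then
    -(τ σ) * ∑ j ∈ Finset.univ.erase (0 : Fin (n + 1)), Kc j 0 *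
        (edgeVal sideA sideB Un j σ * jump Fint sideA sideB (Un 0) K σ
          - edgeVal sideA sideB Un 0 σ * jump Fint sideA sideB (Un j) K σ)
      - τ σ * ∑ j ∈ Finset.univ.erase (0 : Fin (n + 1)), Kc j 0 *
          edgeVal sideA sideB Un j σ * edgeVal sideA sideB Un 0 σ *
          jump Fint sideA sideB (W0 facesOf Fint sideA sideB τ mK ε β Uc Un) K σ
  else
    -(τ σ) * ∑ j ∈ Finset.univ.erase i, Kc i j *
        (edgeVal sideA sideB Un j σ * jump Fint sideA sideB (Un i) K σ
          - edgeVal sideA sideB Un i σ * jump Fint sideA sideB (Un j) K σ)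
      + τ σ * Kc i 0 * edgeVal sideA sideB Un i σ * edgeVal sideA sideB Un 0 σ *
          jump Fint sideA sideB (W0 facesOf Fint sideA sideB τ mK ε β Uc Un) K σ

/-- One backward Euler step of the finite volume scheme:
`m_K (U_{i,K}^{p+1} − U_{i,K}^p)/Δt + Σ_{σ∈ℰ_{K,int}} J_{i,Kσ}^{p+1} = 0`. -/
def SchemeStep {T F : Type*} [DecidableEq T] [DecidableEq F]
    (facesOf : T → Finset F) (Fint : Finset F) (sideA sideB : F → T)
    (τ : F → ℝ) (mK : T → ℝ) (ε β : ℝ) {n : ℕ}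
    (Kc : Fin (n + 1) → Fin (n + 1) → ℝ) (Δt : ℝ)
    (Uc Un : Fin (n + 1) → T → ℝ) : Prop :=
  ∀ i K, mK K * (Un i K - Uc i K) / Δt
      + ∑ σ ∈ (facesOf K).filter (· ∈ Fint),
          dflux facesOf Fint sideA sideB τ mK ε β Kc Uc Un i K σ = 0

private lemma double_swap {n : ℕ} (g : Fin (n+1) → Fin (n+1) → ℝ) :
    ∑ i, ∑ j ∈ Finset.univ.erase i, g i j
      = ∑ i, ∑ j ∈ Finset.univ.erase i, g j i := by
  exact Finset.sum_comm' (fun x y => by simp [Finset.mem_erase, ne_comm])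

private lemma anti_sum_zero {n : ℕ} (g : Fin (n+1) → Fin (n+1) → ℝ)
    (hg : ∀ i j, g j i = -g i j) :
    ∑ i, ∑ j ∈ Finset.univ.erase i, g i j = 0 := by
  have h := double_swap g
  have h2 : ∀ i : Fin (n+1), ∑ j ∈ Finset.univ.erase i, g j i
      = -∑ j ∈ Finset.univ.erase i, g i j := fun i => by
    rw [← Finset.sum_neg_distrib]
    exact Finset.sum_congr rfl fun j _ => hg i j
  simp_rw [h2, Finset.sum_neg_distrib] at h
  linarith

private lemma alg_cancel {n : ℕ} (τσ : ℝ)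
    (Kc : Fin (n + 1) → Fin (n + 1) → ℝ)
    (hKsym : ∀ i j, Kc i j = Kc j i)
    (e d : Fin (n + 1) → ℝ) (w : ℝ) :
    (-τσ * ∑ j ∈ Finset.univ.erase (0 : Fin (n + 1)), Kc j 0 *
        (e j * d 0 - e 0 * d j)
      - τσ * ∑ j ∈ Finset.univ.erase (0 : Fin (n + 1)),
          Kc j 0 * e j * e 0 * w)
    + ∑ i ∈ Finset.univ.erase (0 : Fin (n + 1)),
        (-τσ * ∑ j ∈ Finset.univ.erase i, Kc i j *
            (e j * d i - e i * d j)
          + τσ * Kc i 0 * e i * e 0 * w) = 0 := by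
  set g : Fin (n+1) → Fin (n+1) → ℝ :=
      fun i j => Kc i j * (e j * d i - e i * d j) with hg
  have hanti : ∑ i, ∑ j ∈ Finset.univ.erase i, g i j = 0 := by
    refine anti_sum_zero g fun i j => ?_
    simp only [hg]
    rw [hKsym j i]; ring
  rw [← Finset.add_sum_erase _ _ (Finset.mem_univ (0 : Fin (n+1)))] at hanti
  have h1 : ∑ j ∈ Finset.univ.erase (0 : Fin (n + 1)), Kc j 0 *
        (e j * d 0 - e 0 * d j)
      = ∑ j ∈ Finset.univ.erase (0 : Fin (n + 1)), g 0 j :=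
    Finset.sum_congr rfl fun j _ => by rw [hKsym j 0]
  have h2 : ∑ i ∈ Finset.univ.erase (0 : Fin (n + 1)),
        (-τσ * ∑ j ∈ Finset.univ.erase i, Kc i j *
            (e j * d i - e i * d j)
          + τσ * Kc i 0 * e i * e 0 * w)
      = (-τσ) * (∑ i ∈ Finset.univ.erase (0 : Fin (n + 1)),
            ∑ j ∈ Finset.univ.erase i, g i j)
        + τσ * ∑ i ∈ Finset.univ.erase (0 : Fin (n + 1)),
            Kc i 0 * e i * e 0 * w := by
    rw [Finset.mul_sum, Finset.mul_sum, ← Finset.sum_add_distrib]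
    refine Finset.sum_congr rfl fun i _ => ?_
    simp only [hg]
    ring
  rw [h1, h2]
  linear_combination (-τσ) * hanti

private lemma flux_sum_zero {T F : Type*} [DecidableEq T] [DecidableEq F]
    (facesOf : T → Finset F) (Fint : Finset F) (sideA sideB : F → T)
    (τ : F → ℝ) (mK : T → ℝ) (ε β : ℝ) {n : ℕ}
    (Kc : Fin (n + 1) → Fin (n + 1) → ℝ)
    (hKsym : ∀ i j, Kc i j = Kc j i)
    (Uc Un : Fin (n + 1) → T → ℝ) (K : T) (σ : F) :
    ∑ i, dflux facesOf Fint sideA sideB τ mK ε β Kc Uc Un i K σ = 0 := by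
  have key := alg_cancel (τ σ) Kc hKsym
    (fun j => edgeVal sideA sideB Un j σ)
    (fun j => jump Fint sideA sideB (Un j) K σ)
    (jump Fint sideA sideB (W0 facesOf Fint sideA sideB τ mK ε β Uc Un) K σ)
  rw [← Finset.add_sum_erase _ _ (Finset.mem_univ (0 : Fin (n+1)))]
  rw [Finset.sum_congr rfl (fun i hmem =>
    (by simp only [dflux, if_neg ((Finset.mem_erase.mp hmem).1)] :
      dflux facesOf Fint sideA sideB τ mK ε β Kc Uc Un i K σ
        = -(τ σ) * ∑ j ∈ Finset.univ.erase i, Kc i j *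
            (edgeVal sideA sideB Un j σ *
                jump Fint sideA sideB (Un i) K σ
              - edgeVal sideA sideB Un i σ *
                jump Fint sideA sideB (Un j) K σ)
          + τ σ * Kc i 0 * edgeVal sideA sideB Un i σ *
              edgeVal sideA sideB Un 0 σ *
              jump Fint sideA sideB
                (W0 facesOf Fint sideA sideB τ mK ε β Uc Un) K σ))]
  have h0 : dflux facesOf Fint sideA sideB τ mK ε β Kc Uc Un 0 K σ
      = -(τ σ) * ∑ j ∈ Finset.univ.erase (0 : Fin (n+1)), Kc j 0 *
          (edgeVal sideA sideB Un j σ *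
              jump Fint sideA sideB (Un 0) K σ
            - edgeVal sideA sideB Un 0 σ *
              jump Fint sideA sideB (Un j) K σ)
        - τ σ * ∑ j ∈ Finset.univ.erase (0 : Fin (n+1)), Kc j 0 *
            edgeVal sideA sideB Un j σ * edgeVal sideA sideB Un 0 σ *
            jump Fint sideA sideB
              (W0 facesOf Fint sideA sideB τ mK ε β Uc Un) K σ := by
    simp only [dflux, reduceIte]
  rw [h0]
  exact key

theorem statement_16 {T F : Type*} [Fintype T] [Fintype F]
    [DecidableEq T] [DecidableEq F]
    -- the admissible mesh
    (facesOf : T → Finset F) (Fint : Finset F) (sideA sideB : F → T)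
    (hAB : ∀ σ ∈ Fint, sideA σ ≠ sideB σ)
    (hmemA : ∀ σ ∈ Fint, σ ∈ facesOf (sideA σ))
    (hmemB : ∀ σ ∈ Fint, σ ∈ facesOf (sideB σ))
    (hint : ∀ σ ∈ Fint, ∀ K, σ ∈ facesOf K → K = sideA σ ∨ K = sideB σ)
    (hext : ∀ σ ∉ Fint, ∃! K, σ ∈ facesOf K)
    (τ : F → ℝ) (hτ : ∀ σ, 0 < τ σ)
    (mK : T → ℝ) (hmKpos : ∀ K, 0 < mK K)
    -- parameters of the system
    {n : ℕ} (ε β : ℝ) (hε : 0 < ε) (hβ : 0 < β)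
    (Kc : Fin (n + 1) → Fin (n + 1) → ℝ)
    (hKsym : ∀ i j, Kc i j = Kc j i) (hKpos : ∀ i j, i ≠ j → 0 < Kc i j)
    (Δt : ℝ) (hΔt : 0 < Δt)
    -- one step of the scheme, from U^p =: Uc to U^{p+1} =: Un
    (Uc Un : Fin (n + 1) → T → ℝ)
    (hstep : SchemeStep facesOf Fint sideA sideB τ mK ε β Kc Δt Uc Un)
    -- the discrete volume-filling constraint at step p
    (hvf : ∀ K, ∑ j, Uc j K = 1) :
    ∀ K, ∑ j, Un j K = 1 := by
  intro K
  have hsum : ∑ i, (mK K * (Un i K - Uc i K) / Δt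
      + ∑ σ ∈ (facesOf K).filter (· ∈ Fint),
          dflux facesOf Fint sideA sideB τ mK ε β Kc Uc Un i K σ) = 0 :=
    Finset.sum_eq_zero fun i _ => hstep i K
  rw [Finset.sum_add_distrib, Finset.sum_comm] at hsum
  have hflux : ∑ σ ∈ (facesOf K).filter (· ∈ Fint),
      ∑ i, dflux facesOf Fint sideA sideB τ mK ε β Kc Uc Un i K σ = 0 :=
    Finset.sum_eq_zero fun σ _ =>
      flux_sum_zero facesOf Fint sideA sideB τ mK ε β Kc hKsym Uc Un K σ
  rw [hflux, add_zero] at hsum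
  have h1 : ∑ i, mK K * (Un i K - Uc i K) / Δt
      = mK K * ((∑ i, Un i K) - (∑ i, Uc i K)) / Δt := by
    simp only [mul_sub, sub_div, Finset.sum_sub_distrib, Finset.mul_sum,
      Finset.sum_div]
  rw [h1, hvf K] at hsum
  rcases div_eq_zero_iff.mp hsum with h | h
  · rcases mul_eq_zero.mp h with h' | h'
    · exact absurd h' (ne_of_gt (hmKpos K))
    · linarith
  · exact absurd h (ne_of_gt hΔt)
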